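/- arXiv:1611.09293 — 2 statements merged into one kernel-verified Lean document; each statement's English description precedes it below -/
import Mathlib

section
/- (Gauss–Markov theorem) Let x : Ω → ℝ^M and z : Ω → ℝ^I be square-integrable random vectors with covariance matrices C_{xz} and C_z, and assume C_z is invertible. Set K := C_{xz} C_z^{-1} (the Kálmán gain) and a := E[x] − K E[z]. Then the affine map ζ ↦ K ζ + a is the minimum mean square error affine estimator of x from z: for every matrix L ∈ ℝ^{M×I} and every vector b ∈ ℝ^M, E[‖x − (K z + a)‖²] ≤ E[‖x − (L z + b)‖²], where ‖·‖ is the Euclidean norm on ℝ^M. -/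
/-!
The residual `x - (K z + a)` has mean zero by the choice of `a`, and is uncorrelated with every
coordinate of `z` by the normal equations `K C_z = C_{xz}`. It is therefore orthogonal in `L²`
to every affine function of `z`, in particular to the difference `(K - L) z + (a - b)` of two
affine estimators, and Pythagoras gives
`E‖x - (L z + b)‖² = E‖x - (K z + a)‖² + E‖(K - L) z + (a - b)‖²`.
-/

open MeasureTheory Matrix

/-- The covariance matrix of two square-integrable random vectors:
`(C_{xz})_{m i} = E[(x_m − E[x_m])(z_i − E[z_i])]`. -/
noncomputable def covMatrix {Ω : Type*} [MeasurableSpace Ω] (ℙ : Measure Ω)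
    {M I : ℕ} (x : Ω → Fin M → ℝ) (z : Ω → Fin I → ℝ) : Matrix (Fin M) (Fin I) ℝ :=
  Matrix.of fun m i =>
    ∫ ω, (x ω m - ∫ ω', x ω' m ∂ℙ) * (z ω i - ∫ ω', z ω' i ∂ℙ) ∂ℙ

section

open ProbabilityTheory

variable {Ω : Type*} [MeasurableSpace Ω] {μ : Measure Ω} {ι : Type*} [Fintype ι]
  {z : Ω → ι → ℝ}

theorem covMatrix_apply {M I : ℕ} (x : Ω → Fin M → ℝ) (y : Ω → Fin I → ℝ) (m : Fin M)
    (i : Fin I) : covMatrix μ x y m i = cov[fun ω => x ω m, fun ω => y ω i; μ] :=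
  rfl

theorem memLp_dotProduct_add_const [IsFiniteMeasure μ] {p : ENNReal}
    (hz : ∀ i, MemLp (fun ω => z ω i) p μ) (l : ι → ℝ) (c : ℝ) :
    MemLp (fun ω => l ⬝ᵥ z ω + c) p μ :=
  (memLp_finsetSum _ fun i _ => (hz i).const_mul (l i)).add (memLp_const c)

variable [IsProbabilityMeasure μ]

theorem integral_dotProduct_add_const (hz : ∀ i, Integrable (fun ω => z ω i) μ)
    (l : ι → ℝ) (c : ℝ) :
    ∫ ω, l ⬝ᵥ z ω + c ∂μ = l ⬝ᵥ (fun i => ∫ ω, z ω i ∂μ) + c := by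
  simp only [dotProduct]
  rw [integral_add (integrable_finsetSum _ fun i _ => (hz i).const_mul (l i))
      (integrable_const c),
    integral_finsetSum _ fun i _ => (hz i).const_mul (l i)]
  simp [integral_const_mul]

theorem covariance_dotProduct_add_const_left {Y : Ω → ℝ}
    (hz : ∀ i, MemLp (fun ω => z ω i) 2 μ) (hY : MemLp Y 2 μ) (l : ι → ℝ) (c : ℝ) :
    cov[fun ω => l ⬝ᵥ z ω + c, Y; μ] = ∑ i, l i * cov[fun ω => z ω i, Y; μ] := by
  rw [covariance_add_const_left (X := fun ω => l ⬝ᵥ z ω)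
    (by simpa using (memLp_dotProduct_add_const hz l 0).integrable one_le_two)]
  simp only [dotProduct]
  rw [covariance_fun_sum_left (X := fun i ω => l i * z ω i)
    (fun i => (hz i).const_mul (l i)) hY]
  simp only [covariance_const_mul_left]

theorem covariance_sub_dotProduct_add_const_left {X Y : Ω → ℝ} (hX : MemLp X 2 μ)
    (hz : ∀ i, MemLp (fun ω => z ω i) 2 μ) (hY : MemLp Y 2 μ) (l : ι → ℝ) (c : ℝ) :
    cov[fun ω => X ω - (l ⬝ᵥ z ω + c), Y; μ] =
      cov[X, Y; μ] - ∑ i, l i * cov[fun ω => z ω i, Y; μ] := by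
  rw [covariance_fun_sub_left hX (memLp_dotProduct_add_const hz l c) hY,
    covariance_dotProduct_add_const_left hz hY]

theorem integral_sq_le_integral_add_sq_of_covariance_eq_zero {U V : Ω → ℝ}
    (hU : MemLp U 2 μ) (hV : MemLp V 2 μ) (hU0 : μ[U] = 0) (hUV : cov[U, V; μ] = 0) :
    ∫ ω, U ω ^ 2 ∂μ ≤ ∫ ω, (U ω + V ω) ^ 2 ∂μ := by
  have horth : ∫ ω, U ω * V ω ∂μ = 0 := by
    simpa [hUV, hU0] using (covariance_eq_sub hU hV).symm
  have hU_sq : Integrable (fun ω => U ω ^ 2) μ := hU.integrable_sq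
  have hcross : Integrable (fun ω => 2 * (U ω * V ω)) μ := (hU.integrable_mul hV).const_mul 2
  have hexpand : ∫ ω, (U ω + V ω) ^ 2 ∂μ =
      ∫ ω, U ω ^ 2 ∂μ + 2 * ∫ ω, U ω * V ω ∂μ + ∫ ω, V ω ^ 2 ∂μ := by
    simp_rw [add_sq, mul_assoc]
    rw [integral_add (f := fun ω => U ω ^ 2 + 2 * (U ω * V ω)) (hU_sq.add hcross)
      hV.integrable_sq, integral_add hU_sq hcross, integral_const_mul]
  have hV_sq_nonneg : 0 ≤ ∫ ω, V ω ^ 2 ∂μ := integral_nonneg fun ω => sq_nonneg (V ω)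
  rw [hexpand, horth]
  linarith

theorem integral_sq_sub_le_of_unbiased_of_covariance_eq {X : Ω → ℝ} (hX : MemLp X 2 μ)
    (hz : ∀ i, MemLp (fun ω => z ω i) 2 μ) (k : ι → ℝ) (α : ℝ)
    (hmean : μ[X] = k ⬝ᵥ (fun i => ∫ ω, z ω i ∂μ) + α)
    (hcov : ∀ i, cov[X, fun ω => z ω i; μ] =
      ∑ j, k j * cov[fun ω => z ω j, fun ω => z ω i; μ])
    (l : ι → ℝ) (β : ℝ) :
    ∫ ω, (X ω - (k ⬝ᵥ z ω + α)) ^ 2 ∂μ ≤ ∫ ω, (X ω - (l ⬝ᵥ z ω + β)) ^ 2 ∂μ := by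
  have hres : MemLp (fun ω => X ω - (k ⬝ᵥ z ω + α)) 2 μ :=
    hX.sub (memLp_dotProduct_add_const hz k α)
  have hres_mean : ∫ ω, X ω - (k ⬝ᵥ z ω + α) ∂μ = 0 := by
    rw [integral_sub (hX.integrable one_le_two)
      ((memLp_dotProduct_add_const hz k α).integrable one_le_two),
      integral_dotProduct_add_const (fun i => (hz i).integrable one_le_two), ← hmean, sub_self]
  have hres_cov :
      cov[fun ω => X ω - (k ⬝ᵥ z ω + α), fun ω => (k - l) ⬝ᵥ z ω + (α - β); μ] = 0 := by
    rw [covariance_comm, covariance_dotProduct_add_const_left hz hres]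
    refine Finset.sum_eq_zero fun i _ => ?_
    rw [covariance_comm, covariance_sub_dotProduct_add_const_left hX hz (hz i), hcov, sub_self,
      mul_zero]
  have hsplit : ∀ ω, X ω - (l ⬝ᵥ z ω + β) =
      X ω - (k ⬝ᵥ z ω + α) + ((k - l) ⬝ᵥ z ω + (α - β)) := fun ω => by
    rw [sub_dotProduct]; ring
  simp_rw [hsplit]
  exact integral_sq_le_integral_add_sq_of_covariance_eq_zero hres
    (memLp_dotProduct_add_const hz _ _) hres_mean hres_cov

end

theorem integral_sum_sq_sub_le_of_unbiased_of_covMatrix_eq {Ω : Type*} [MeasurableSpace Ω]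
    {μ : Measure Ω} [IsProbabilityMeasure μ] {M I : ℕ} {x : Ω → Fin M → ℝ}
    {z : Ω → Fin I → ℝ} (hx : ∀ m, MemLp (fun ω => x ω m) 2 μ)
    (hz : ∀ i, MemLp (fun ω => z ω i) 2 μ) (K : Matrix (Fin M) (Fin I) ℝ) (a : Fin M → ℝ)
    (hmean : (fun m => ∫ ω, x ω m ∂μ) = K *ᵥ (fun i => ∫ ω, z ω i ∂μ) + a)
    (hcov : covMatrix μ x z = K * covMatrix μ z z)
    (L : Matrix (Fin M) (Fin I) ℝ) (b : Fin M → ℝ) :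
    ∫ ω, ∑ m, (x ω m - (K *ᵥ z ω + a) m) ^ 2 ∂μ ≤
      ∫ ω, ∑ m, (x ω m - (L *ᵥ z ω + b) m) ^ 2 ∂μ := by
  have hsq (A : Matrix (Fin M) (Fin I) ℝ) (c : Fin M → ℝ) (m : Fin M) :
      Integrable (fun ω => (x ω m - (A *ᵥ z ω + c) m) ^ 2) μ :=
    ((hx m).sub (memLp_dotProduct_add_const hz (A m) (c m))).integrable_sq
  rw [integral_finsetSum _ fun m _ => hsq K a m, integral_finsetSum _ fun m _ => hsq L b m]
  refine Finset.sum_le_sum fun m _ =>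
    integral_sq_sub_le_of_unbiased_of_covariance_eq (hx m) hz (K m) (a m) (congrFun hmean m)
      (fun i => ?_) (L m) (b m)
  simpa [Matrix.mul_apply, covMatrix_apply] using congrFun₂ hcov m i

/-- Gauss–Markov theorem: the affine map given by the Kálmán gain `K = C_{xz} C_z⁻¹`
and offset `a = E[x] − K E[z]` is the minimum mean square error affine estimator
of `x` from `z`. -/
theorem gauss_markov
    {Ω : Type*} [MeasurableSpace Ω] (ℙ : Measure Ω) [IsProbabilityMeasure ℙ]
    {M I : ℕ} (x : Ω → Fin M → ℝ) (z : Ω → Fin I → ℝ)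
    (hx : ∀ m, MemLp (fun ω => x ω m) 2 ℙ) (hz : ∀ i, MemLp (fun ω => z ω i) 2 ℙ)
    (hCz : IsUnit (covMatrix ℙ z z))
    (K : Matrix (Fin M) (Fin I) ℝ) (hK : K = covMatrix ℙ x z * (covMatrix ℙ z z)⁻¹)
    (a : Fin M → ℝ)
    (ha : a = (fun m => ∫ ω, x ω m ∂ℙ) - K.mulVec (fun i => ∫ ω, z ω i ∂ℙ)) :
    ∀ (L : Matrix (Fin M) (Fin I) ℝ) (b : Fin M → ℝ),
      ∫ ω, ∑ m, (x ω m - (K.mulVec (z ω) + a) m) ^ 2 ∂ℙ ≤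
        ∫ ω, ∑ m, (x ω m - (L.mulVec (z ω) + b) m) ^ 2 ∂ℙ := by
  have hnormal : covMatrix ℙ x z = K * covMatrix ℙ z z := by
    rw [hK, Matrix.mul_assoc, nonsing_inv_mul _ ((isUnit_iff_isUnit_det _).mp hCz),
      Matrix.mul_one]
  have hunbiased : (fun m => ∫ ω, x ω m ∂ℙ) = K *ᵥ (fun i => ∫ ω, z ω i ∂ℙ) + a := by
    rw [ha, add_sub_cancel]
  exact integral_sum_sq_sub_le_of_unbiased_of_covMatrix_eq hx hz K a hunbiased hnormal
end

section
/- (Exactness of the linear filter in the Gaussian case, conditional-mean form) Let x, ε : Ω → ℝ be independent random variables such that the law of x is the Gaussian measure with mean m and variance σ_x² > 0 and the law of ε is the Gaussian measure with mean 0 and variance σ_ε² > 0. Set z := x + ε. Then the conditional expectation of x given σ(z) is the affine function of the observation given by the Kálmán gain: E[x|σ(z)](ω) = m + (σ_x²/(σ_x² + σ_ε²))·(z(ω) − m) for ℙ-almost every ω. -/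
/-!
With `c = σ_x² / (σ_x² + σ_ε²)`, the residual `x - c z` is uncorrelated with `z = x + ε`.
As `(x, z)` is jointly Gaussian, the residual is then independent of `z`, so its conditional
expectation given `σ(z)` is its mean `(1 - c) m`, while `c z` is `σ(z)`-measurable.
-/

open MeasureTheory ProbabilityTheory

namespace ProbabilityTheory

variable {Ω : Type*} {mΩ : MeasurableSpace Ω} {P : Measure Ω}

lemma condExp_add_comp_of_indepFun [IsFiniteMeasure P] {β : Type*} [MeasurableSpace β]
    {Y : Ω → ℝ} {Z : Ω → β} {g : β → ℝ}
    (hY : Measurable Y) (hZ : Measurable Z) (hg : Measurable g) (hYZ : IndepFun Y Z P)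
    (hYi : Integrable Y P) (hgZ : Integrable (g ∘ Z) P) :
    P[Y + g ∘ Z | MeasurableSpace.comap Z inferInstance] =ᵐ[P] fun ω => P[Y] + g (Z ω) := by
  have hY_const : P[Y | MeasurableSpace.comap Z inferInstance] =ᵐ[P] fun _ => P[Y] :=
    condExp_indep_eq hY.comap_le hZ.comap_le (comap_measurable Y).stronglyMeasurable hYZ
  have hgZ_self : P[g ∘ Z | MeasurableSpace.comap Z inferInstance] = g ∘ Z :=
    condExp_of_stronglyMeasurable hZ.comap_le
      (hg.comp (comap_measurable Z)).stronglyMeasurable hgZ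
  filter_upwards [condExp_add hYi hgZ _, hY_const] with ω h_add h_const
  rw [h_add, Pi.add_apply, h_const, hgZ_self, Function.comp_apply]

lemma IndepFun.hasGaussianLaw_fun_prodMk_add {E : Type*} [NormedAddCommGroup E]
    [NormedSpace ℝ E] [MeasurableSpace E] [CompleteSpace E] [BorelSpace E]
    [SecondCountableTopology E] {X ε : Ω → E} (hX : HasGaussianLaw X P)
    (hε : HasGaussianLaw ε P) (hXε : IndepFun X ε P) :
    HasGaussianLaw (fun ω => (X ω, (X + ε) ω)) P :=
  (hXε.hasGaussianLaw hX hε).map_fun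
    ((ContinuousLinearMap.fst ℝ E E).prod
      (ContinuousLinearMap.fst ℝ E E + ContinuousLinearMap.snd ℝ E E))

lemma HasGaussianLaw.indepFun_sub_covariance_div_variance_mul {X Z : Ω → ℝ}
    (h : HasGaussianLaw (fun ω => (X ω, Z ω)) P) (hZ : Var[Z; P] ≠ 0) :
    IndepFun (fun ω => X ω - cov[X, Z; P] / Var[Z; P] * Z ω) Z P := by
  have := h.isProbabilityMeasure
  have h_pair : HasGaussianLaw (fun ω => (X ω - cov[X, Z; P] / Var[Z; P] * Z ω, Z ω)) P :=
    h.map_fun ((ContinuousLinearMap.fst ℝ ℝ ℝ -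
      (cov[X, Z; P] / Var[Z; P]) • ContinuousLinearMap.snd ℝ ℝ ℝ).prod
        (ContinuousLinearMap.snd ℝ ℝ ℝ))
  refine h_pair.indepFun_of_covariance_eq_zero ?_
  rw [covariance_fun_sub_left h.fst.memLp_two (h.snd.memLp_two.const_mul _),
    covariance_const_mul_left, covariance_self h.snd.aemeasurable, div_mul_cancel₀ _ hZ,
    sub_self]
  exact h.snd.memLp_two

end ProbabilityTheory

theorem gaussian_conditional_mean_is_affine_general
    {Ω : Type*} {𝒜 : MeasurableSpace Ω} (P : Measure Ω) [IsProbabilityMeasure P]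
    (x ε : Ω → ℝ) (hx : Measurable x) (hε : Measurable ε)
    (hindep : IndepFun x ε P)
    (m : ℝ) (sx se : NNReal) (hsx : 0 < sx)
    (hlawx : Measure.map x P = gaussianReal m sx)
    (hlawε : Measure.map ε P = gaussianReal 0 se)
    (z : Ω → ℝ) (hz : z = x + ε) :
    P[x | MeasurableSpace.comap z inferInstance] =ᵐ[P]
      fun ω => m + ((sx : ℝ) / ((sx : ℝ) + (se : ℝ))) * (z ω - m) := by
  subst hz
  have hx_law : HasLaw x (gaussianReal m sx) P := ⟨hx.aemeasurable, hlawx⟩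
  have hε_law : HasLaw ε (gaussianReal 0 se) P := ⟨hε.aemeasurable, hlawε⟩
  have hxG := hx_law.hasGaussianLaw
  have hεG := hε_law.hasGaussianLaw
  have hvar_x : Var[x; P] = sx := by rw [hx_law.variance_eq, variance_id_gaussianReal]
  have hvar_z : Var[x + ε; P] = sx + se := by
    rw [hindep.variance_add hxG.memLp_two hεG.memLp_two, hvar_x, hε_law.variance_eq,
      variance_id_gaussianReal]
  have hcov : cov[x, x + ε; P] = sx := by
    rw [covariance_add_right hxG.memLp_two hxG.memLp_two hεG.memLp_two,
      covariance_self hx.aemeasurable, hindep.covariance_eq_zero hxG.memLp_two hεG.memLp_two,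
      hvar_x, add_zero]
  have h_residual := (hindep.hasGaussianLaw_fun_prodMk_add hxG hεG
    ).indepFun_sub_covariance_div_variance_mul (by rw [hvar_z]; positivity)
  rw [hcov, hvar_z] at h_residual
  set c : ℝ := (sx : ℝ) / ((sx : ℝ) + (se : ℝ))
  have hz_int : Integrable (x + ε) P := hxG.integrable.add hεG.integrable
  have h_mean : P[fun ω => x ω - c * (x + ε) ω] = m - c * m := by
    rw [integral_sub hxG.integrable (hz_int.const_mul c), integral_const_mul,
      integral_add' hxG.integrable hεG.integrable, hx_law.integral_eq, hε_law.integral_eq,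
      integral_id_gaussianReal, integral_id_gaussianReal, add_zero]
  have h_split : x = (fun ω => x ω - c * (x + ε) ω) + (fun t => c * t) ∘ (x + ε) := by
    ext ω
    simp only [Pi.add_apply, Function.comp_apply]
    ring
  have h_condExp := condExp_add_comp_of_indepFun (by fun_prop) (hx.add hε)
    (measurable_const_mul c) h_residual (hxG.integrable.sub (hz_int.const_mul c))
    (hz_int.const_mul c)
  rw [← h_split, h_mean] at h_condExp
  filter_upwards [h_condExp] with ω hω
  rw [hω]
  ring

/-- Exactness of the linear filter in the Gaussian case (conditional-mean form):
for independent Gaussians `x ~ N(m, σ_x²)` and `ε ~ N(0, σ_ε²)` and `z = x + ε`,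
`E[x|σ(z)] = m + (σ_x²/(σ_x² + σ_ε²))·(z − m)` almost surely. -/
theorem gaussian_conditional_mean_is_affine
    {Ω : Type*} {𝒜 : MeasurableSpace Ω} (P : Measure Ω) [IsProbabilityMeasure P]
    (x ε : Ω → ℝ) (hx : Measurable x) (hε : Measurable ε)
    (hindep : IndepFun x ε P)
    (m : ℝ) (sx se : NNReal) (hsx : 0 < sx) (hse : 0 < se)
    (hlawx : Measure.map x P = gaussianReal m sx)
    (hlawε : Measure.map ε P = gaussianReal 0 se)
    (z : Ω → ℝ) (hz : z = x + ε) :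
    P[x | MeasurableSpace.comap z inferInstance] =ᵐ[P]
      fun ω => m + ((sx : ℝ) / ((sx : ℝ) + (se : ℝ))) * (z ω - m) :=
  gaussian_conditional_mean_is_affine_general (𝒜 := 𝒜) P x ε hx hε hindep m sx se hsx hlawx hlawε z
    hz
end
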